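/- arXiv:math/0602458 — 3 statements merged into one kernel-verified Lean document; each statement's English description precedes it below -/
import Mathlib

section
/- For the fundamental functions ℓ_k of trigonometric interpolation at the equidistant nodes x_k = 2kπ/(2n+1), k = 0,…,2n (i.e., ℓ_k is the trigonometric polynomial of degree ≤ n with ℓ_k(x_j) = δ_{jk}), the identity ∑_{k=0}^{2n} (4ℓ_k(x)³ − 3ℓ_k(x)⁴) = 1 holds for all real x. -/
/-!
With `N = 2n + 1` and `D_n(θ) = ∑_{|m| ≤ n} e^{imθ}`, the fundamental functions are
`ℓ_k(x) = D_n(x - x_k) / N`. Since `∑_j e^{i m x_j} = N · [N ∣ m]`, interpolation at the nodes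
reproduces every `e^{imx}` with `|m| ≤ n`, so a trigonometric polynomial of degree `≤ n` is
determined by its values at the nodes.

Expanding `D_n^p` over `p`-tuples of frequencies and summing over the nodes, only the tuple sums
divisible by `N` survive, and for `p ≤ 4` these are `0` and `±N`. By stars and bars the number of
tuples with sum `N` is `C(n+1, 2)` for `p = 3` and `C(2n+2, 3)` for `p = 4`; since
`4N · C(n+1, 2) = 3 · C(2n+2, 3)`, the terms `e^{±iNx}` cancel in `∑_k (4ℓ_k³ - 3ℓ_k⁴)`. The sum
is therefore constant, and at `x = 0`, where `ℓ_k(0) = δ_{k0}`, it equals `1`.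
-/

open Real

def IsTrigPoly (n : ℕ) (f : ℝ → ℝ) : Prop :=
  ∃ a b : ℕ → ℝ, ∀ x : ℝ,
    f x = a 0 + ∑ m ∈ Finset.Icc 1 n, (a m * Real.cos (m * x) + b m * Real.sin (m * x))

open Complex Finset

theorem Int.eq_zero_or_eq_or_eq_neg_of_dvd {N M : ℤ} (h : N ∣ M) (hM : |M| < 2 * N) :
    M = 0 ∨ M = N ∨ M = -N := by
  obtain ⟨c, rfl⟩ := h
  have hN : 0 < N := by nlinarith [abs_nonneg (N * c)]
  have hc : |c| < 2 := by
    rw [abs_mul, abs_of_pos hN] at hM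
    nlinarith
  rcases (by rw [abs_lt] at hc; omega : c = 0 ∨ c = 1 ∨ c = -1) with rfl | rfl | rfl <;> simp

noncomputable section

namespace TrigInterpolation

def node (n j : ℕ) : ℝ := 2 * j * π / (2 * n + 1)

theorem sum_exp_node (n : ℕ) (m : ℤ) :
    ∑ j : Fin (2 * n + 1), cexp (↑(m * node n j) * I)
      = if (2 * n + 1 : ℤ) ∣ m then (2 * n + 1 : ℂ) else 0 := by
  have hζ := isPrimitiveRoot_exp (2 * n + 1) (2 * n).succ_ne_zero
  set ζ := cexp (2 * π * I / ↑(2 * n + 1))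
  have hterm (j : ℕ) : cexp (↑(m * node n j) * I) = (ζ ^ m) ^ j := by
    rw [← zpow_natCast, ← zpow_mul, ← exp_int_mul, node]
    congr 1
    push_cast
    field_simp
  simp_rw [hterm, Fin.sum_univ_eq_sum_range (fun j => (ζ ^ m) ^ j)]
  split_ifs with hdvd
  · simp [(hζ.zpow_eq_one_iff_dvd m).2 (by exact_mod_cast hdvd)]
  · have hne : ζ ^ m - 1 ≠ 0 :=
      sub_ne_zero.2 fun h => hdvd (by exact_mod_cast (hζ.zpow_eq_one_iff_dvd m).1 h)
    have hpow : (ζ ^ m) ^ (2 * n + 1) = 1 := by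
      rw [← zpow_natCast, ← zpow_mul, mul_comm, zpow_mul, zpow_natCast, hζ.pow_eq_one, one_zpow]
    simpa [hpow, hne] using geom_sum_mul (ζ ^ m) (2 * n + 1)

theorem sum_Icc_neg_eq {M : Type*} [AddCommMonoid M] (f : ℤ → M) (n : ℕ) :
    ∑ m ∈ Icc (-n : ℤ) n, f m = f 0 + ∑ m ∈ Icc 1 n, (f m + f (-m)) := by
  induction n with
  | zero => simp
  | succ n ih =>
    have hIcc : Icc (-(n + 1 : ℕ) : ℤ) (n + 1 : ℕ)
        = insert ((n : ℤ) + 1) (insert (-((n : ℤ) + 1)) (Icc (-n : ℤ) n)) := by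
      ext m; simp only [mem_Icc, mem_insert]; omega
    rw [hIcc, sum_insert (by simp only [mem_insert, mem_Icc]; omega), sum_insert (by simp), ih,
      sum_Icc_succ_top (by omega)]
    push_cast
    abel

def dirichletKernel (n : ℕ) (θ : ℝ) : ℂ := ∑ m ∈ Icc (-n : ℤ) n, cexp (↑(m * θ) * I)

theorem dirichletKernel_eq (n : ℕ) (θ : ℝ) :
    dirichletKernel n θ = ↑(1 + 2 * ∑ m ∈ Icc 1 n, Real.cos (m * θ)) := by
  rw [dirichletKernel, sum_Icc_neg_eq]
  push_cast
  rw [mul_sum]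
  refine congrArg₂ _ (by simp) (sum_congr rfl fun m _ => ?_)
  rw [two_cos]
  ring_nf

def lagrangeBasis (n k : ℕ) (x : ℝ) : ℝ :=
  (1 + 2 * ∑ m ∈ Icc 1 n, Real.cos (m * (x - node n k))) / (2 * n + 1)

theorem ofReal_lagrangeBasis (n k : ℕ) (x : ℝ) :
    (lagrangeBasis n k x : ℂ) = dirichletKernel n (x - node n k) / (2 * n + 1) := by
  rw [dirichletKernel_eq, lagrangeBasis]
  push_cast
  rfl

theorem isTrigPoly_lagrangeBasis (n k : ℕ) : IsTrigPoly n (lagrangeBasis n k) := by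
  refine ⟨fun m => (if m = 0 then 1 else 2) * Real.cos (m * node n k) / (2 * n + 1),
    fun m => 2 * Real.sin (m * node n k) / (2 * n + 1), fun x => ?_⟩
  simp only [lagrangeBasis, mul_sub, Real.cos_sub, CharP.cast_eq_zero, zero_mul, Real.cos_zero,
    if_pos, mul_sum]
  rw [add_div, sum_div, one_mul]
  congr 1
  refine sum_congr rfl fun m hm => ?_
  rw [if_neg (by simp at hm; omega)]
  ring

theorem sum_exp_mul_lagrangeBasis (n : ℕ) {m : ℤ} (hm : m ∈ Icc (-n : ℤ) n) (x : ℝ) :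
    ∑ j : Fin (2 * n + 1), cexp (↑(m * node n j) * I) * lagrangeBasis n j x
      = cexp (↑(m * x) * I) := by
  have hN : (2 * n + 1 : ℂ) ≠ 0 := by exact_mod_cast (2 * n).succ_ne_zero
  calc ∑ j : Fin (2 * n + 1), cexp (↑(m * node n j) * I) * lagrangeBasis n j x
      = ∑ m' ∈ Icc (-n : ℤ) n, cexp (↑(m' * x) * I) *
          ((∑ j : Fin (2 * n + 1), cexp (↑(((m - m' : ℤ) : ℝ) * node n j) * I)) / (2 * n + 1)) := by
        simp_rw [ofReal_lagrangeBasis, dirichletKernel, mul_div_assoc', mul_sum, sum_div]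
        rw [sum_comm]
        refine sum_congr rfl fun m' _ => sum_congr rfl fun j _ => ?_
        simp only [← Complex.exp_add]
        congr 2
        push_cast
        ring
    _ = ∑ m' ∈ Icc (-n : ℤ) n, if m = m' then cexp (↑(m' * x) * I) else 0 := by
        refine sum_congr rfl fun m' hm' => ?_
        rw [sum_exp_node]
        by_cases h : m = m'
        · simp [h, hN]
        · have hdvd : ¬(2 * n + 1 : ℤ) ∣ m - m' := fun hdvd => h <| sub_eq_zero.1 <|
            Int.eq_zero_of_abs_lt_dvd hdvd (by rw [mem_Icc] at hm hm'; rw [abs_lt]; omega)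
          simp [h, hdvd]
    _ = cexp (↑(m * x) * I) := by rw [sum_ite_eq, if_pos hm]

theorem sum_cos_mul_lagrangeBasis (n : ℕ) {m : ℕ} (hm : m ≤ n) (x : ℝ) :
    ∑ j : Fin (2 * n + 1), Real.cos (m * node n j) * lagrangeBasis n j x = Real.cos (m * x) := by
  have h := congrArg re (sum_exp_mul_lagrangeBasis n (m := m) (by simp; omega) x)
  simpa only [re_sum, re_mul_ofReal, exp_ofReal_mul_I_re, Int.cast_natCast] using h

theorem sum_sin_mul_lagrangeBasis (n : ℕ) {m : ℕ} (hm : m ≤ n) (x : ℝ) :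
    ∑ j : Fin (2 * n + 1), Real.sin (m * node n j) * lagrangeBasis n j x = Real.sin (m * x) := by
  have h := congrArg im (sum_exp_mul_lagrangeBasis n (m := m) (by simp; omega) x)
  simpa only [im_sum, im_mul_ofReal, exp_ofReal_mul_I_im, Int.cast_natCast] using h

theorem _root_.IsTrigPoly.sum_mul_lagrangeBasis {n : ℕ} {f : ℝ → ℝ} (hf : IsTrigPoly n f)
    (x : ℝ) : ∑ j : Fin (2 * n + 1), f (node n j) * lagrangeBasis n j x = f x := by
  obtain ⟨a, b, hab⟩ := hf
  have hcos (m : ℕ) (hm : m ∈ Icc 1 n) := sum_cos_mul_lagrangeBasis n (mem_Icc.1 hm).2 x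
  have hsin (m : ℕ) (hm : m ∈ Icc 1 n) := sum_sin_mul_lagrangeBasis n (mem_Icc.1 hm).2 x
  have hone := sum_cos_mul_lagrangeBasis n (Nat.zero_le n) x
  simp only [CharP.cast_eq_zero, zero_mul, Real.cos_zero, one_mul] at hone
  simp_rw [hab, add_mul, sum_mul, sum_add_distrib]
  rw [← mul_sum, hone, mul_one, sum_comm, ← sum_add_distrib]
  refine congrArg _ (sum_congr rfl fun m hm => ?_)
  simp only [add_mul, sum_add_distrib, mul_assoc, ← mul_sum, hcos m hm, hsin m hm]

theorem eq_lagrangeBasis_of_isTrigPoly {n : ℕ} {f : ℝ → ℝ} (hf : IsTrigPoly n f)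
    (k : Fin (2 * n + 1)) (hk : ∀ j : Fin (2 * n + 1), f (node n j) = if j = k then 1 else 0) :
    f = lagrangeBasis n k :=
  funext fun x => by simp [← hf.sum_mul_lagrangeBasis x, hk]

def freqTuples (n p : ℕ) : Finset (Fin p → ℤ) := Fintype.piFinset fun _ => Icc (-n : ℤ) n

theorem abs_sum_le_of_mem_freqTuples {n p : ℕ} {t : Fin p → ℤ} (ht : t ∈ freqTuples n p) :
    |∑ i, t i| ≤ p * n := by
  simp only [freqTuples, Fintype.mem_piFinset, mem_Icc] at ht
  calc |∑ i, t i| ≤ ∑ i, |t i| := abs_sum_le_sum_abs _ _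
    _ ≤ ∑ _i : Fin p, (n : ℤ) := sum_le_sum fun i _ => abs_le.2 (ht i)
    _ = p * n := by simp

theorem dirichletKernel_pow (n p : ℕ) (θ : ℝ) :
    dirichletKernel n θ ^ p = ∑ t ∈ freqTuples n p, cexp (↑((∑ i, t i : ℤ) * θ) * I) := by
  rw [dirichletKernel, ← Fin.prod_const, prod_univ_sum]
  refine sum_congr rfl fun t _ => ?_
  rw [← Complex.exp_sum]
  push_cast
  rw [sum_mul, sum_mul]

def dirichletPowCoeff (n p : ℕ) (v : ℤ) : ℕ := #{t ∈ freqTuples n p | ∑ i, t i = v}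

theorem dirichletPowCoeff_neg (n p : ℕ) (v : ℤ) :
    dirichletPowCoeff n p (-v) = dirichletPowCoeff n p v := by
  refine card_nbij' (fun t => -t) (fun t => -t) ?_ ?_ (fun t _ => neg_neg t) (fun t _ => neg_neg t)
  all_goals
    intro t ht
    simp only [freqTuples, mem_coe, mem_filter, Fintype.mem_piFinset, mem_Icc,
      Pi.neg_apply, sum_neg_distrib] at ht ⊢
    exact ⟨fun i => by have := ht.1 i; omega, by omega⟩

theorem card_piAntidiag_univ_fin (p k : ℕ) :
    #(piAntidiag (univ : Finset (Fin p)) k) = (p + k - 1).choose k := by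
  rw [← map_sym_eq_piAntidiag, card_map, sym_univ, card_univ, Sym.card_sym_fin_eq_multichoose,
    Nat.multichoose_eq]

theorem dirichletPowCoeff_eq_choose {n p k : ℕ} {v : ℤ} (hk : k ≤ 2 * n) (hv : v + k = p * n) :
    dirichletPowCoeff n p v = (p + k - 1).choose k := by
  rw [← card_piAntidiag_univ_fin]
  -- `t ↦ n - t` turns the tuples into the weak compositions of `k` into `p` parts
  refine card_nbij' (fun t i => (n - t i).toNat) (fun s i => n - s i) ?_ ?_ ?_ ?_
  · intro t ht
    simp only [freqTuples, mem_coe, mem_filter, Fintype.mem_piFinset, mem_Icc] at ht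
    simp only [mem_coe, mem_piAntidiag, mem_univ, implies_true, and_true]
    zify
    rw [sum_congr rfl fun i _ => Int.toNat_of_nonneg (by linarith [(ht.1 i).2])]
    simp only [sum_sub_distrib, sum_const, card_univ, Fintype.card_fin, Int.nsmul_eq_mul, ht.2]
    omega
  · intro s hs
    simp only [mem_coe, mem_piAntidiag, mem_univ, implies_true, and_true] at hs
    have hle (i : Fin p) : s i ≤ k := hs ▸ single_le_sum (fun j _ => Nat.zero_le (s j)) (mem_univ i)
    simp only [freqTuples, mem_coe, mem_filter, Fintype.mem_piFinset, mem_Icc]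
    refine ⟨fun i => ⟨by have := hle i; omega, by omega⟩, ?_⟩
    rw [sum_sub_distrib, ← Nat.cast_sum (s := univ) (f := s), hs]
    simp only [sum_const, card_univ, Fintype.card_fin, Int.nsmul_eq_mul]
    omega
  · intro t ht
    simp only [freqTuples, mem_coe, mem_filter, Fintype.mem_piFinset, mem_Icc] at ht
    funext i
    have := ht.1 i
    dsimp only
    omega
  · intro s _
    funext i
    simp

theorem sum_exp_mul_sub_node (n : ℕ) (M : ℤ) (x : ℝ) :
    ∑ k : Fin (2 * n + 1), cexp (↑(M * (x - node n k)) * I)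
      = if (2 * n + 1 : ℤ) ∣ M then (2 * n + 1) * cexp (↑(M * x) * I) else 0 := by
  have h := sum_exp_node n (-M)
  simp only [dvd_neg] at h
  calc ∑ k : Fin (2 * n + 1), cexp (↑(M * (x - node n k)) * I)
      = cexp (↑(M * x) * I) * ∑ k : Fin (2 * n + 1), cexp (↑(((-M : ℤ) : ℝ) * node n k) * I) := by
        rw [mul_sum]
        refine sum_congr rfl fun k _ => ?_
        rw [← Complex.exp_add]
        congr 1
        push_cast
        ring
    _ = _ := by
        rw [h]
        split_ifs <;> ring

theorem sum_dirichletKernel_pow_sub_node (n p : ℕ) (hp : p ≤ 4) (x : ℝ) :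
    ∑ k : Fin (2 * n + 1), dirichletKernel n (x - node n k) ^ p
      = (2 * n + 1) * (dirichletPowCoeff n p 0
          + dirichletPowCoeff n p (2 * n + 1) * cexp (↑((2 * n + 1 : ℤ) * x) * I)
          + dirichletPowCoeff n p (-(2 * n + 1)) * cexp (↑((-(2 * n + 1) : ℤ) * x) * I)) := by
  set N : ℤ := 2 * n + 1
  have hN0 : N ≠ 0 := by omega
  have hNneg : N ≠ -N := by omega
  have hclassify (t) (ht : t ∈ freqTuples n p) :
      (if N ∣ ∑ i, t i then (2 * n + 1) * cexp (↑((∑ i, t i : ℤ) * x) * I) else 0)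
        = (2 * n + 1) * ((if ∑ i, t i = 0 then 1 else 0)
          + (if ∑ i, t i = N then 1 else 0) * cexp (↑(N * x) * I)
          + (if ∑ i, t i = -N then 1 else 0) * cexp (↑((-N : ℤ) * x) * I)) := by
    by_cases hdvd : N ∣ ∑ i, t i
    · have hbound : |∑ i, t i| < 2 * N := by
        have hsum := abs_sum_le_of_mem_freqTuples ht
        have hpn : (p : ℤ) * n ≤ 4 * n := by gcongr; exact_mod_cast hp
        simp only [N]
        linarith
      rcases Int.eq_zero_or_eq_or_eq_neg_of_dvd hdvd hbound with h | h | h <;>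
        simp [h, hN0, hN0.symm, hNneg, hNneg.symm]
    · have h0 : ∑ i, t i ≠ 0 := fun h => hdvd (h ▸ dvd_zero N)
      have hN : ∑ i, t i ≠ N := fun h => hdvd (h ▸ dvd_refl N)
      have hN' : ∑ i, t i ≠ -N := fun h => hdvd (h ▸ (dvd_neg.2 (dvd_refl N)))
      simp [hdvd, h0, hN, hN']
  simp_rw [dirichletKernel_pow]
  rw [sum_comm]
  simp_rw [sum_exp_mul_sub_node]
  rw [sum_congr rfl hclassify, ← mul_sum, sum_add_distrib, sum_add_distrib, ← sum_mul, ← sum_mul,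
    sum_boole, sum_boole, sum_boole]
  rfl

theorem four_mul_dirichletPowCoeff_three {n : ℕ} (hn : 1 ≤ n) :
    4 * (2 * n + 1) * dirichletPowCoeff n 3 (2 * n + 1)
      = 3 * dirichletPowCoeff n 4 (2 * n + 1) := by
  obtain ⟨m, rfl⟩ := Nat.exists_eq_add_of_le' hn
  rw [dirichletPowCoeff_eq_choose (k := m) (by omega) (by push_cast; ring),
    dirichletPowCoeff_eq_choose (k := 2 * m + 1) (by omega) (by push_cast; ring),
    show 3 + m - 1 = m + 2 by omega, show 4 + (2 * m + 1) - 1 = (2 * m + 1) + 3 by omega,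
    Nat.choose_symm_add, Nat.choose_symm_add]
  have h2 := Nat.add_one_mul_choose_eq (m + 1) 1
  have h3 := Nat.add_one_mul_choose_eq (2 * m + 3) 2
  have h3' := Nat.add_one_mul_choose_eq (2 * m + 2) 1
  simp only [Nat.choose_one_right] at h2 h3 h3'
  nlinarith

theorem sum_cubic_quartic_lagrangeBasis_eq {n : ℕ} (hn : 1 ≤ n) (x y : ℝ) :
    ∑ k : Fin (2 * n + 1), (4 * lagrangeBasis n k x ^ 3 - 3 * lagrangeBasis n k x ^ 4)
      = ∑ k : Fin (2 * n + 1), (4 * lagrangeBasis n k y ^ 3 - 3 * lagrangeBasis n k y ^ 4) := by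
  have hN : (2 * n + 1 : ℂ) ≠ 0 := by exact_mod_cast (2 * n).succ_ne_zero
  have hcoeff : 4 * (2 * n + 1) * (dirichletPowCoeff n 3 (2 * n + 1) : ℂ)
      = 3 * dirichletPowCoeff n 4 (2 * n + 1) := by
    exact_mod_cast four_mul_dirichletPowCoeff_three hn
  have hconst (x : ℝ) :
      ((∑ k : Fin (2 * n + 1), (4 * lagrangeBasis n k x ^ 3 - 3 * lagrangeBasis n k x ^ 4) : ℝ) : ℂ)
        = 4 * dirichletPowCoeff n 3 0 / (2 * n + 1) ^ 2
          - 3 * dirichletPowCoeff n 4 0 / (2 * n + 1) ^ 3 := by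
    calc _ = 4 / (2 * n + 1) ^ 3 * ∑ k : Fin (2 * n + 1), dirichletKernel n (x - node n k) ^ 3
          - 3 / (2 * n + 1) ^ 4 * ∑ k : Fin (2 * n + 1), dirichletKernel n (x - node n k) ^ 4 := by
          push_cast
          simp_rw [ofReal_lagrangeBasis, div_pow, mul_sum, ← sum_sub_distrib]
          refine sum_congr rfl fun k _ => ?_
          ring
      _ = _ := by
          rw [sum_dirichletKernel_pow_sub_node n 3 (by norm_num),
            sum_dirichletKernel_pow_sub_node n 4 (by norm_num), dirichletPowCoeff_neg,
            dirichletPowCoeff_neg]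
          generalize cexp (↑((2 * n + 1 : ℤ) * x) * I) = a
          generalize cexp (↑((-(2 * n + 1) : ℤ) * x) * I) = b
          field_simp
          linear_combination (a + b) * hcoeff
  exact_mod_cast (hconst x).trans (hconst y).symm

end TrigInterpolation

end

/-- For the fundamental functions `ℓ k` of trigonometric interpolation at the
equidistant nodes `x k = 2kπ/(2n+1)`, `k = 0,…,2n`, the identity
`∑ k, (4 ℓ k x ^ 3 - 3 ℓ k x ^ 4) = 1` holds for all real `x`. -/
theorem sum_fundamental_identity (n : ℕ) (hn : 1 ≤ n)
    (ℓ : Fin (2 * n + 1) → ℝ → ℝ)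
    (htrig : ∀ k, IsTrigPoly n (ℓ k))
    (hinterp : ∀ k j : Fin (2 * n + 1),
      ℓ k (2 * (j : ℕ) * π / (2 * n + 1)) = if j = k then 1 else 0)
    (x : ℝ) :
    ∑ k : Fin (2 * n + 1), (4 * (ℓ k x) ^ 3 - 3 * (ℓ k x) ^ 4) = 1 := by
  have hℓ (k : Fin (2 * n + 1)) : ℓ k = TrigInterpolation.lagrangeBasis n k :=
    TrigInterpolation.eq_lagrangeBasis_of_isTrigPoly (htrig k) k (hinterp k)
  have hℓ0 (k : Fin (2 * n + 1)) : ℓ k 0 = if k = 0 then 1 else 0 := by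
    simpa [eq_comm] using hinterp k 0
  calc ∑ k : Fin (2 * n + 1), (4 * (ℓ k x) ^ 3 - 3 * (ℓ k x) ^ 4)
      = ∑ k : Fin (2 * n + 1), (4 * (ℓ k 0) ^ 3 - 3 * (ℓ k 0) ^ 4) := by
        simp only [hℓ]
        exact TrigInterpolation.sum_cubic_quartic_lagrangeBasis_eq hn x 0
    _ = 1 := by norm_num [hℓ0, ite_pow]
end

section
/- The Shepard operator R_n with exponent p = 2 is continuously differentiable on (−1,1) and satisfies R_n′(f, j/n) = 0 at every interior node j/n, for every f : [−1,1] → ℝ (Hermite–Fejér type behavior). -/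
/-!
Multiplying numerator and denominator by `∏ᵢ (x - tᵢ)²` writes the Shepard operator as a
quotient `(∑ᵢ cᵢ Qᵢ) / (∑ᵢ Qᵢ)` of polynomials, where `Qᵢ = ∏_{k ≠ i} (x - tₖ)²`, and this form
also gives the right value at the nodes. The denominator has no real zero, so the quotient is
smooth. At a node `tⱼ` every `Qᵢ` with `i ≠ j` has a double zero, so to first order the quotient
is `cⱼ Qⱼ / Qⱼ = cⱼ`, whence its derivative vanishes there.
-/

open Real Classical

/-- The Shepard operator with exponent `p = 2` on `[-1,1]`, based on the
equidistant nodes `k/n`, `|k| ≤ n`, extended by the node values of `f`. -/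
noncomputable def shepard2 (n : ℕ) (f : ℝ → ℝ) (x : ℝ) : ℝ :=
  if ∃ j : ℤ, |j| ≤ (n : ℤ) ∧ x = (j : ℝ) / n then f x
  else (∑ k ∈ Finset.Icc (-(n : ℤ)) (n : ℤ), f ((k : ℝ) / n) * ((x - (k : ℝ) / n) ^ 2)⁻¹) /
    (∑ k ∈ Finset.Icc (-(n : ℤ)) (n : ℤ), ((x - (k : ℝ) / n) ^ 2)⁻¹)

open Finset

section ShepardSum

variable {ι : Type*} [DecidableEq ι]

noncomputable def deletedSqProd (s : Finset ι) (t : ι → ℝ) (i : ι) (x : ℝ) : ℝ :=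
  ∏ k ∈ s.erase i, (x - t k) ^ 2

noncomputable def shepardSum (s : Finset ι) (t : ι → ℝ) (c : ι → ℝ) (x : ℝ) : ℝ :=
  ∑ i ∈ s, c i * deletedSqProd s t i x

variable {s : Finset ι} {t : ι → ℝ} {i j : ι} {x : ℝ}

lemma contDiff_deletedSqProd (i : ι) {m : WithTop ℕ∞} : ContDiff ℝ m (deletedSqProd s t i) :=
  contDiff_prod fun _ _ => (contDiff_id.sub contDiff_const).pow 2

lemma contDiff_shepardSum (c : ι → ℝ) {m : WithTop ℕ∞} : ContDiff ℝ m (shepardSum s t c) :=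
  ContDiff.sum fun i _ => contDiff_const.mul (contDiff_deletedSqProd i)

lemma deletedSqProd_pos (hx : ∀ k ∈ s.erase i, x ≠ t k) : 0 < deletedSqProd s t i x :=
  prod_pos fun k hk => by
    have := sub_ne_zero.mpr (hx k hk)
    positivity

lemma deletedSqProd_self_pos (ht : Set.InjOn t s) (hi : i ∈ s) : 0 < deletedSqProd s t i (t i) :=
  deletedSqProd_pos fun _ hk hki => (mem_erase.mp hk).1 (ht hi (mem_erase.mp hk).2 hki).symm

lemma deletedSqProd_node_eq_zero (hj : j ∈ s) (hij : i ≠ j) : deletedSqProd s t i (t j) = 0 :=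
  prod_eq_zero (mem_erase.mpr ⟨hij.symm, hj⟩) (by simp)

lemma hasDerivAt_sub_sq_mul {g : ℝ → ℝ} {a : ℝ} (hg : DifferentiableAt ℝ g a) :
    HasDerivAt (fun x => (x - a) ^ 2 * g x) 0 a := by
  refine ((((hasDerivAt_id a).sub_const a).fun_pow 2).fun_mul hg.hasDerivAt).congr_deriv ?_
  simp

lemma hasDerivAt_deletedSqProd_node (hj : j ∈ s) (hij : i ≠ j) :
    HasDerivAt (deletedSqProd s t i) 0 (t j) := by
  have hsplit : deletedSqProd s t i = fun x => (x - t j) ^ 2 * deletedSqProd (s.erase i) t j x :=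
    funext fun x => (mul_prod_erase _ (fun k => (x - t k) ^ 2) (mem_erase.mpr ⟨hij.symm, hj⟩)).symm
  rw [hsplit]
  exact hasDerivAt_sub_sq_mul ((contDiff_deletedSqProd (m := 1) j).differentiable one_ne_zero _)

lemma shepardSum_node (c : ι → ℝ) (hj : j ∈ s) :
    shepardSum s t c (t j) = c j * deletedSqProd s t j (t j) :=
  sum_eq_single_of_mem j hj fun _ _ hij => by rw [deletedSqProd_node_eq_zero hj hij, mul_zero]

lemma hasDerivAt_shepardSum_node (c : ι → ℝ) (hj : j ∈ s) :
    HasDerivAt (shepardSum s t c) (c j * deriv (deletedSqProd s t j) (t j)) (t j) := by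
  have hsum := HasDerivAt.fun_sum (u := s) (A := fun i x => c i * deletedSqProd s t i x)
    (A' := fun i => c i * deriv (deletedSqProd s t i) (t j)) fun i _ =>
      ((contDiff_deletedSqProd (m := 1) i).differentiable one_ne_zero _).hasDerivAt.const_mul (c i)
  rwa [sum_eq_single_of_mem j hj fun i _ hij => by
    rw [(hasDerivAt_deletedSqProd_node hj hij).deriv, mul_zero]] at hsum

lemma shepardSum_one_pos (ht : Set.InjOn t s) (hs : s.Nonempty) (x : ℝ) :
    0 < shepardSum s t 1 x := by
  simp only [shepardSum, Pi.one_apply, one_mul]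
  refine sum_pos' (fun _ _ => prod_nonneg fun _ _ => sq_nonneg _) ?_
  by_cases hnode : ∃ j ∈ s, x = t j
  · obtain ⟨j, hj, rfl⟩ := hnode
    exact ⟨j, hj, deletedSqProd_self_pos ht hj⟩
  · push Not at hnode
    obtain ⟨i, hi⟩ := hs
    exact ⟨i, hi, deletedSqProd_pos fun k hk => hnode k (mem_erase.mp hk).2⟩

lemma shepardSum_div_node (ht : Set.InjOn t s) (c : ι → ℝ) (hj : j ∈ s) :
    shepardSum s t c (t j) / shepardSum s t 1 (t j) = c j := by
  rw [shepardSum_node c hj, shepardSum_node 1 hj, Pi.one_apply, one_mul,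
    mul_div_cancel_right₀ _ (deletedSqProd_self_pos ht hj).ne']

lemma hasDerivAt_shepardSum_div_node (ht : Set.InjOn t s) (c : ι → ℝ) (hj : j ∈ s) :
    HasDerivAt (fun x => shepardSum s t c x / shepardSum s t 1 x) 0 (t j) := by
  have hden : shepardSum s t 1 (t j) ≠ 0 := by
    rw [shepardSum_node 1 hj, Pi.one_apply, one_mul]
    exact (deletedSqProd_self_pos ht hj).ne'
  refine ((hasDerivAt_shepardSum_node c hj).div (hasDerivAt_shepardSum_node 1 hj) hden).congr_deriv ?_
  rw [shepardSum_node c hj, shepardSum_node 1 hj]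
  ring

lemma shepardSum_eq_prod_mul_sum_inv (c : ι → ℝ) (hx : ∀ i ∈ s, x ≠ t i) :
    shepardSum s t c x = (∏ i ∈ s, (x - t i) ^ 2) * ∑ i ∈ s, c i * ((x - t i) ^ 2)⁻¹ := by
  rw [mul_sum]
  refine sum_congr rfl fun i hi => ?_
  have := sub_ne_zero.mpr (hx i hi)
  rw [deletedSqProd, ← mul_prod_erase s (fun k => (x - t k) ^ 2) hi]
  field_simp

lemma shepardSum_div_off_nodes (c : ι → ℝ) (hx : ∀ i ∈ s, x ≠ t i) :
    shepardSum s t c x / shepardSum s t 1 x =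
      (∑ i ∈ s, c i * ((x - t i) ^ 2)⁻¹) / ∑ i ∈ s, ((x - t i) ^ 2)⁻¹ := by
  have hprod : ∏ i ∈ s, (x - t i) ^ 2 ≠ 0 :=
    prod_ne_zero_iff.mpr fun i hi => pow_ne_zero 2 (sub_ne_zero.mpr (hx i hi))
  rw [shepardSum_eq_prod_mul_sum_inv c hx, shepardSum_eq_prod_mul_sum_inv 1 hx,
    mul_div_mul_left _ _ hprod]
  simp only [Pi.one_apply, one_mul]

end ShepardSum

lemma injOn_intCast_div_natCast (n : ℕ) :
    Set.InjOn (fun k : ℤ => (k : ℝ) / n) (Icc (-(n : ℤ)) n) := by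
  rcases Nat.eq_zero_or_pos n with rfl | hn
  · simp
  · intro k _ l _ hkl
    have : (n : ℝ) ≠ 0 := by positivity
    exact_mod_cast (div_left_inj' this).mp hkl

lemma shepard2_eq_shepardSum_div (n : ℕ) (f : ℝ → ℝ) :
    shepard2 n f = fun x =>
      shepardSum (Icc (-(n : ℤ)) n) (fun k => (k : ℝ) / n) (fun k => f ((k : ℝ) / n)) x /
        shepardSum (Icc (-(n : ℤ)) n) (fun k => (k : ℝ) / n) 1 x := by
  funext x
  unfold shepard2
  split_ifs with hnode
  · obtain ⟨j, hj, rfl⟩ := hnode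
    exact (shepardSum_div_node (injOn_intCast_div_natCast n) (fun k : ℤ => f ((k : ℝ) / n))
      (mem_Icc.mpr (abs_le.mp hj))).symm
  · exact (shepardSum_div_off_nodes _ fun k hk hxk =>
      hnode ⟨k, abs_le.mpr (mem_Icc.mp hk), hxk⟩).symm

theorem shepard2_deriv_zero_at_nodes_general (n : ℕ) (f : ℝ → ℝ) :
    ContDiffOn ℝ 1 (shepard2 n f) (Set.Ioo (-1 : ℝ) 1) ∧
      ∀ j : ℤ, |j| ≤ (n : ℤ) → (j : ℝ) / n ∈ Set.Ioo (-1 : ℝ) 1 →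
        deriv (shepard2 n f) ((j : ℝ) / n) = 0 := by
  have hinj := injOn_intCast_div_natCast n
  rw [shepard2_eq_shepardSum_div]
  refine ⟨?_, fun j hj _ => ?_⟩
  · have hden := shepardSum_one_pos hinj ⟨0, by simp⟩
    exact ((contDiff_shepardSum _).div (contDiff_shepardSum _) fun x => (hden x).ne').contDiffOn
  · exact (hasDerivAt_shepardSum_div_node hinj _ (mem_Icc.mpr (abs_le.mp hj))).deriv

/-- The Shepard operator with exponent `2` is continuously differentiable on
`(-1,1)` and has vanishing derivative at every interior node
(Hermite–Fejér type behavior). -/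
theorem shepard2_deriv_zero_at_nodes (n : ℕ) (hn : 1 ≤ n) (f : ℝ → ℝ) :
    ContDiffOn ℝ 1 (shepard2 n f) (Set.Ioo (-1 : ℝ) 1) ∧
      ∀ j : ℤ, |j| ≤ (n : ℤ) → (j : ℝ) / n ∈ Set.Ioo (-1 : ℝ) 1 →
        deriv (shepard2 n f) ((j : ℝ) / n) = 0 :=
  shepard2_deriv_zero_at_nodes_general n f
end

section
/- There exists a constant c > 0 such that for every continuous f : [−1,1] → ℝ and every n ≥ 1, the Shepard operator with exponent p = 4 satisfies max_{|x|≤1} |f(x) − R_n(f,x)| ≤ c·ω(f, 1/n). -/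
open Real Classical

/-- The Shepard operator with exponent `p = 4` on `[-1,1]`, based on the
equidistant nodes `k/n`, `|k| ≤ n`, extended by the node values of `f`. -/
noncomputable def shepard4 (n : ℕ) (f : ℝ → ℝ) (x : ℝ) : ℝ :=
  if ∃ j : ℤ, |j| ≤ (n : ℤ) ∧ x = (j : ℝ) / n then f x
  else (∑ k ∈ Finset.Icc (-(n : ℤ)) (n : ℤ), f ((k : ℝ) / n) * ((x - (k : ℝ) / n) ^ 4)⁻¹) /
    (∑ k ∈ Finset.Icc (-(n : ℤ)) (n : ℤ), ((x - (k : ℝ) / n) ^ 4)⁻¹)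

/-- Modulus of continuity of `f` on `[-1,1]`. -/
noncomputable def omegaIcc (f : ℝ → ℝ) (δ : ℝ) : ℝ :=
  sSup {d : ℝ | ∃ x ∈ Set.Icc (-1 : ℝ) 1, ∃ y ∈ Set.Icc (-1 : ℝ) 1,
    |x - y| ≤ δ ∧ d = |f x - f y|}

/-!
With `t = n x` the weights of `R_n(f, x)` are proportional to `|t - k|⁻⁴`, and splitting
`[x, k/n]` into pieces of length `≤ 1/n` gives `|f x - f (k/n)| ≤ (1 + |t - k|) ω(f, 1/n)`.
The error is therefore at most `ω(f, 1/n) (1 + ∑ |t - k|⁻³ / ∑ |t - k|⁻⁴)`. The nearest node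
`k₀ = round t` has `|t - k₀| ≤ 1/2`, so its weight `|t - k₀|⁻⁴ ≥ 16` dominates both its own
cubic term and the tail `∑_{k ≠ k₀} |t - k|⁻³ ≤ 8 ∑_{m ≠ 0} |m|⁻³`, a convergent series.
-/

open Finset

section ModulusOfContinuity

variable {f : ℝ → ℝ}

lemma omegaIcc_bddAbove (hf : ContinuousOn f (Set.Icc (-1 : ℝ) 1)) (δ : ℝ) :
    BddAbove {d : ℝ | ∃ x ∈ Set.Icc (-1 : ℝ) 1, ∃ y ∈ Set.Icc (-1 : ℝ) 1,
      |x - y| ≤ δ ∧ d = |f x - f y|} := by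
  obtain ⟨C, hC⟩ := isCompact_Icc.exists_bound_of_continuousOn hf
  refine ⟨C + C, ?_⟩
  rintro d ⟨x, hx, y, hy, -, rfl⟩
  exact (abs_sub _ _).trans (add_le_add (hC x hx) (hC y hy))

lemma abs_sub_le_omegaIcc (hf : ContinuousOn f (Set.Icc (-1 : ℝ) 1)) {δ x y : ℝ}
    (hx : x ∈ Set.Icc (-1 : ℝ) 1) (hy : y ∈ Set.Icc (-1 : ℝ) 1) (h : |x - y| ≤ δ) :
    |f x - f y| ≤ omegaIcc f δ :=
  le_csSup (omegaIcc_bddAbove hf δ) ⟨x, hx, y, hy, h, rfl⟩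

lemma omegaIcc_nonneg (hf : ContinuousOn f (Set.Icc (-1 : ℝ) 1)) {δ : ℝ} (hδ : 0 ≤ δ) :
    0 ≤ omegaIcc f δ := by
  have h1 : (1 : ℝ) ∈ Set.Icc (-1 : ℝ) 1 := by norm_num
  simpa using abs_sub_le_omegaIcc hf h1 h1 (by simpa using hδ)

lemma abs_sub_le_nat_mul_omegaIcc (hf : ContinuousOn f (Set.Icc (-1 : ℝ) 1)) {δ : ℝ} (m : ℕ)
    {x y : ℝ} (hx : x ∈ Set.Icc (-1 : ℝ) 1) (hy : y ∈ Set.Icc (-1 : ℝ) 1) (h : |x - y| ≤ m * δ) :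
    |f x - f y| ≤ m * omegaIcc f δ := by
  induction m generalizing x with
  | zero =>
    rw [Nat.cast_zero, zero_mul, abs_nonpos_iff, sub_eq_zero] at h
    simp [h]
  | succ m ih =>
    have hm : (0 : ℝ) < m + 1 := by positivity
    set z := y + ((m : ℝ) / (m + 1)) • (x - y)
    have hz : z ∈ Set.Icc (-1 : ℝ) 1 :=
      (convex_Icc (-1 : ℝ) 1).add_smul_sub_mem hy hx
        ⟨by positivity, (div_le_one hm).2 (by linarith)⟩
    have hxz : |x - z| ≤ δ := by
      have : x - z = (x - y) / (m + 1) := by simp only [z, smul_eq_mul]; field_simp; ring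
      rw [this, abs_div, abs_of_pos hm, div_le_iff₀ hm]
      push_cast at h
      linarith
    have hzy : |z - y| ≤ m * δ := by
      have : z - y = (m / (m + 1)) * (x - y) := by simp only [z, smul_eq_mul]; ring
      rw [this, abs_mul, abs_of_nonneg (by positivity), div_mul_eq_mul_div, div_le_iff₀ hm]
      push_cast at h
      nlinarith [(Nat.cast_nonneg m : (0 : ℝ) ≤ m)]
    calc |f x - f y| ≤ |f x - f z| + |f z - f y| := abs_sub_le _ _ _
      _ ≤ omegaIcc f δ + m * omegaIcc f δ :=
        add_le_add (abs_sub_le_omegaIcc hf hx hz hxz) (ih hz hzy)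
      _ = (m + 1 : ℕ) * omegaIcc f δ := by push_cast; ring

lemma abs_sub_le_one_add_div_mul_omegaIcc (hf : ContinuousOn f (Set.Icc (-1 : ℝ) 1)) {δ x y : ℝ}
    (hδ : 0 < δ) (hx : x ∈ Set.Icc (-1 : ℝ) 1) (hy : y ∈ Set.Icc (-1 : ℝ) 1) :
    |f x - f y| ≤ (1 + |x - y| / δ) * omegaIcc f δ := by
  calc |f x - f y| ≤ ⌈|x - y| / δ⌉₊ * omegaIcc f δ :=
        abs_sub_le_nat_mul_omegaIcc hf _ hx hy ((div_le_iff₀ hδ).1 (Nat.le_ceil _))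
    _ ≤ (1 + |x - y| / δ) * omegaIcc f δ := by
        gcongr
        · exact omegaIcc_nonneg hf hδ.le
        · linarith [Nat.ceil_lt_add_one (by positivity : 0 ≤ |x - y| / δ)]

lemma abs_sub_node_le_omegaIcc (hf : ContinuousOn f (Set.Icc (-1 : ℝ) 1)) {n : ℕ} (hn : 0 < n)
    {x : ℝ} (hx : x ∈ Set.Icc (-1 : ℝ) 1) {k : ℤ} (hk : k ∈ Icc (-(n : ℤ)) n) :
    |f x - f (k / n)| ≤ (1 + |n * x - k|) * omegaIcc f (1 / n) := by
  have hn' : (0 : ℝ) < n := Nat.cast_pos.2 hn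
  obtain ⟨hk₁, hk₂⟩ := mem_Icc.1 hk
  have hkn : (k : ℝ) / n ∈ Set.Icc (-1 : ℝ) 1 :=
    ⟨by rw [le_div_iff₀ hn', neg_one_mul]; exact_mod_cast hk₁,
      by rw [div_le_one hn']; exact_mod_cast hk₂⟩
  have hscale : n * x - k = (x - k / n) * n := by
    rw [sub_mul, div_mul_cancel₀ _ hn'.ne', mul_comm]
  have := abs_sub_le_one_add_div_mul_omegaIcc hf (one_div_pos.2 hn') hx hkn
  rw [div_div_eq_mul_div, div_one] at this
  rwa [hscale, abs_mul, Nat.abs_cast]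

end ModulusOfContinuity

lemma abs_sub_sum_mul_div_sum_le {ι : Type*} (s : Finset ι) (a : ℝ) (b w : ι → ℝ)
    (hw : ∀ i ∈ s, 0 ≤ w i) (hW : 0 < ∑ i ∈ s, w i) :
    |a - (∑ i ∈ s, b i * w i) / ∑ i ∈ s, w i| ≤
      (∑ i ∈ s, |a - b i| * w i) / ∑ i ∈ s, w i := by
  have hdiff : a - (∑ i ∈ s, b i * w i) / ∑ i ∈ s, w i =
      (∑ i ∈ s, (a - b i) * w i) / ∑ i ∈ s, w i := by
    rw [eq_div_iff hW.ne', sub_mul, div_mul_cancel₀ _ hW.ne', mul_sum, ← sum_sub_distrib]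
    exact sum_congr rfl fun _ _ => by ring
  rw [hdiff, abs_div, abs_of_pos hW]
  gcongr
  calc |∑ i ∈ s, (a - b i) * w i| ≤ ∑ i ∈ s, |(a - b i) * w i| := abs_sum_le_sum_abs _ _
    _ = ∑ i ∈ s, |a - b i| * w i :=
      sum_congr rfl fun i hi => by rw [abs_mul, abs_of_nonneg (hw i hi)]

lemma round_mem_Icc_of_abs_le {t : ℝ} {n : ℤ} (h : |t| ≤ n) : round t ∈ Icc (-n) n := by
  have hlt : |(round t : ℝ)| < n + 1 := by
    linarith [abs_sub_abs_le_abs_sub (round t : ℝ) t, abs_sub_comm (round t : ℝ) t,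
      abs_sub_round t]
  have : |round t| < n + 1 := by exact_mod_cast hlt
  exact mem_Icc.2 (abs_le.1 (by omega))

-- The `m = 0` term of the series is `0⁻¹ = 0`.
lemma sum_inv_abs_sub_pow_le_tsum {p : ℕ} (hp : 1 < p) (s : Finset ℤ) (j : ℤ) :
    ∑ k ∈ s, (|(k : ℝ) - j| ^ p)⁻¹ ≤ ∑' m : ℤ, (|(m : ℝ)| ^ p)⁻¹ := by
  have hsum : Summable fun m : ℤ => (|(m : ℝ)| ^ p)⁻¹ := by
    simpa [abs_inv, abs_pow] using (summable_one_div_int_pow.2 hp).abs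
  calc ∑ k ∈ s, (|(k : ℝ) - j| ^ p)⁻¹
      = ∑ m ∈ s.map (Equiv.subRight j).toEmbedding, (|(m : ℝ)| ^ p)⁻¹ := by simp
    _ ≤ ∑' m : ℤ, (|(m : ℝ)| ^ p)⁻¹ := hsum.sum_le_tsum _ fun _ _ => by positivity

lemma abs_mul_inv_abs_pow_succ_le_of_ne_round (p : ℕ) {t : ℝ} {k : ℤ} (hk : k ≠ round t) :
    |t - k| * (|t - k| ^ (p + 1))⁻¹ ≤ 2 ^ p * (|(k : ℝ) - round t| ^ p)⁻¹ := by
  have h1 : 1 ≤ |(k : ℝ) - round t| := by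
    exact_mod_cast Int.one_le_abs (sub_ne_zero.2 hk)
  have hdist : |(k : ℝ) - round t| / 2 ≤ |t - k| := by
    have := abs_sub_le (k : ℝ) t (round t)
    rw [abs_sub_comm (k : ℝ) t] at this
    linarith [abs_sub_round t]
  have hpos : 0 < |t - k| := by linarith
  calc |t - k| * (|t - k| ^ (p + 1))⁻¹ = (|t - k| ^ p)⁻¹ := by
        rw [pow_succ', mul_inv, mul_inv_cancel_left₀ hpos.ne']
    _ ≤ ((|(k : ℝ) - round t| / 2) ^ p)⁻¹ := by gcongr
    _ = 2 ^ p * (|(k : ℝ) - round t| ^ p)⁻¹ := by rw [div_pow, inv_div, div_eq_mul_inv]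

lemma sum_abs_mul_inv_abs_pow_succ_le {p : ℕ} (hp : 1 < p) {s : Finset ℤ} {t : ℝ}
    (hs : round t ∈ s) (ht : t ≠ round t) :
    ∑ k ∈ s, |t - k| * (|t - k| ^ (p + 1))⁻¹ ≤
      (1 + ∑' m : ℤ, (|(m : ℝ)| ^ p)⁻¹) / 2 * ∑ k ∈ s, (|t - k| ^ (p + 1))⁻¹ := by
  set ζ := ∑' m : ℤ, (|(m : ℝ)| ^ p)⁻¹
  set a := |t - round t|
  have ha : 0 < a := abs_pos.2 (sub_ne_zero.2 ht)
  have hζ : 0 ≤ ζ := tsum_nonneg fun _ => by positivity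
  have hnear : a * (a ^ (p + 1))⁻¹ ≤ 1 / 2 * (a ^ (p + 1))⁻¹ := by
    gcongr
    exact abs_sub_round t
  have hlarge : 2 ^ (p + 1) ≤ (a ^ (p + 1))⁻¹ := by
    rw [← inv_pow]
    gcongr
    rw [le_inv_comm₀ two_pos ha]
    simpa using abs_sub_round t
  have hfar : ∑ k ∈ s.erase (round t), |t - k| * (|t - k| ^ (p + 1))⁻¹ ≤
      ζ / 2 * (a ^ (p + 1))⁻¹ :=
    calc ∑ k ∈ s.erase (round t), |t - k| * (|t - k| ^ (p + 1))⁻¹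
        ≤ ∑ k ∈ s.erase (round t), 2 ^ p * (|(k : ℝ) - round t| ^ p)⁻¹ :=
          sum_le_sum fun k hk => abs_mul_inv_abs_pow_succ_le_of_ne_round p (ne_of_mem_erase hk)
      _ ≤ 2 ^ p * ζ := by
          rw [← mul_sum]
          gcongr
          exact sum_inv_abs_sub_pow_le_tsum hp _ _
      _ ≤ ζ / 2 * (a ^ (p + 1))⁻¹ := by
          rw [pow_succ] at hlarge
          nlinarith
  have hrest : 0 ≤ ∑ k ∈ s.erase (round t), (|t - k| ^ (p + 1))⁻¹ :=
    sum_nonneg fun _ _ => by positivity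
  rw [← add_sum_erase _ _ hs, ← add_sum_erase _ _ hs]
  nlinarith

lemma abs_sub_div_sum_inv_abs_pow_succ_le {p : ℕ} (hp : 1 < p) {s : Finset ℤ} {t : ℝ}
    (hs : round t ∈ s) (ht : t ≠ round t) {a ω : ℝ} (b : ℤ → ℝ)
    (hb : ∀ k ∈ s, |a - b k| ≤ (1 + |t - k|) * ω) :
    |a - (∑ k ∈ s, b k * (|t - k| ^ (p + 1))⁻¹) / ∑ k ∈ s, (|t - k| ^ (p + 1))⁻¹| ≤
      (1 + (1 + ∑' m : ℤ, (|(m : ℝ)| ^ p)⁻¹) / 2) * ω := by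
  set w := fun k : ℤ => (|t - k| ^ (p + 1))⁻¹
  have hω : 0 ≤ ω := nonneg_of_mul_nonneg_right ((abs_nonneg _).trans (hb _ hs)) (by positivity)
  have hW : 0 < ∑ k ∈ s, w k :=
    sum_pos' (fun _ _ => by positivity)
      ⟨round t, hs, inv_pos.2 (pow_pos (abs_pos.2 (sub_ne_zero.2 ht)) _)⟩
  have hsplit : ∑ k ∈ s, (1 + |t - k|) * ω * w k =
      ω * ∑ k ∈ s, w k + ω * ∑ k ∈ s, |t - k| * w k := by
    rw [mul_sum, mul_sum, ← sum_add_distrib]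
    exact sum_congr rfl fun _ _ => by ring
  calc |a - (∑ k ∈ s, b k * w k) / ∑ k ∈ s, w k|
      ≤ (∑ k ∈ s, |a - b k| * w k) / ∑ k ∈ s, w k :=
        abs_sub_sum_mul_div_sum_le _ _ _ _ (fun _ _ => by positivity) hW
    _ ≤ (∑ k ∈ s, (1 + |t - k|) * ω * w k) / ∑ k ∈ s, w k := by
        gcongr with k hk
        exact hb k hk
    _ ≤ (1 + (1 + ∑' m : ℤ, (|(m : ℝ)| ^ p)⁻¹) / 2) * ω := by
        rw [div_le_iff₀ hW, hsplit]
        nlinarith [mul_le_mul_of_nonneg_left (sum_abs_mul_inv_abs_pow_succ_le hp hs ht) hω]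

lemma shepard4_eq_of_not_node {n : ℕ} (hn : n ≠ 0) (f : ℝ → ℝ) {x : ℝ}
    (hx : ¬∃ j : ℤ, |j| ≤ (n : ℤ) ∧ x = (j : ℝ) / n) :
    shepard4 n f x =
      (∑ k ∈ Icc (-(n : ℤ)) n, f ((k : ℝ) / n) * (|n * x - k| ^ 4)⁻¹) /
        ∑ k ∈ Icc (-(n : ℤ)) n, (|n * x - k| ^ 4)⁻¹ := by
  have hn' : (n : ℝ) ≠ 0 := Nat.cast_ne_zero.2 hn
  have hweight : ∀ k : ℤ, ((x - (k : ℝ) / n) ^ 4)⁻¹ = (n : ℝ) ^ 4 * (|n * x - k| ^ 4)⁻¹ := by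
    intro k
    rw [(by decide : Even 4).pow_abs,
      ← mul_inv_cancel_left₀ (pow_ne_zero 4 hn') ((x - k / n) ^ 4)⁻¹, ← mul_inv,
      ← mul_pow, mul_sub, mul_div_cancel₀ _ hn']
  simp only [shepard4, if_neg hx, hweight, mul_left_comm _ ((n : ℝ) ^ 4), ← mul_sum]
  exact mul_div_mul_left _ _ (pow_ne_zero 4 hn')

/-- There is a constant `c > 0` such that for every continuous `f` on `[-1,1]`
and every `n ≥ 1` the Shepard operator with exponent `4` satisfies
`max_{|x|≤1} |f(x) - R_n(f,x)| ≤ c ω(f, 1/n)` (Jackson order). -/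
theorem shepard4_jackson :
    ∃ c : ℝ, 0 < c ∧ ∀ f : ℝ → ℝ, ContinuousOn f (Set.Icc (-1 : ℝ) 1) →
      ∀ n : ℕ, 1 ≤ n → ∀ x ∈ Set.Icc (-1 : ℝ) 1,
        |f x - shepard4 n f x| ≤ c * omegaIcc f (1 / n) := by
  refine ⟨1 + (1 + ∑' m : ℤ, (|(m : ℝ)| ^ 3)⁻¹) / 2, by positivity, fun f hf n hn x hx => ?_⟩
  have hn' : (0 : ℝ) < n := by exact_mod_cast hn
  by_cases hnode : ∃ j : ℤ, |j| ≤ (n : ℤ) ∧ x = (j : ℝ) / n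
  · rw [shepard4, if_pos hnode, sub_self, abs_zero]
    have := omegaIcc_nonneg hf (by positivity : (0 : ℝ) ≤ 1 / n)
    positivity
  have hround : round ((n : ℝ) * x) ∈ Icc (-(n : ℤ)) n := by
    refine round_mem_Icc_of_abs_le ?_
    rw [abs_mul, Nat.abs_cast, Int.cast_natCast]
    exact mul_le_of_le_one_right hn'.le (abs_le.2 hx)
  have ht : (n : ℝ) * x ≠ round ((n : ℝ) * x) := fun h =>
    hnode ⟨_, abs_le.2 (mem_Icc.1 hround), by rw [← h, mul_div_cancel_left₀ _ hn'.ne']⟩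
  rw [shepard4_eq_of_not_node (by omega) f hnode]
  exact abs_sub_div_sum_inv_abs_pow_succ_le (by norm_num) hround ht _
    fun k hk => abs_sub_node_le_omegaIcc hf hn hx hk
end
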